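/- The vectors w₁⁺(p), w₁⁻(p), w_{r⁻²}(p), w_{r²}(p) defined above are eigenvectors of the 4×4 real symmetric matrix B(p) with entries B₀₀ = (r⁻²+r²)/2, B₀ᵢ = Bᵢ₀ = ((r⁻²-r²)/(2r)) pⁱ, Bᵢⱼ = ((r⁻²+r²-2)/(2r²)) pⁱpʲ + δᵢⱼ (i,j = 1,2,3), with eigenvalues 1, 1, r⁻², r² respectively. -/
import Mathlib
set_option maxHeartbeats 1000000


noncomputable section

/-- `r = |𝐩|` for `p = (p⁰, p¹, p², p³)`. -/
def rr (p : Fin 4 → ℝ) : ℝ := Real.sqrt ((p 1) ^ 2 + (p 2) ^ 2 + (p 3) ^ 2)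

/-- `ρ = √((p¹)² + (p²)²)`. -/
def rho (p : Fin 4 → ℝ) : ℝ := Real.sqrt ((p 1) ^ 2 + (p 2) ^ 2)

/-- The off-diagonal coefficient `(r⁻² - r²)/(2r)`. -/
def bcoef (p : Fin 4 → ℝ) : ℝ := ((rr p)⁻¹ ^ 2 - (rr p) ^ 2) / (2 * rr p)

/-- The spatial coefficient `(r⁻² + r² - 2)/(2r²)`. -/
def ccoef (p : Fin 4 → ℝ) : ℝ := ((rr p)⁻¹ ^ 2 + (rr p) ^ 2 - 2) / (2 * (rr p) ^ 2)

/-- The real symmetric matrix `B(p)`. -/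
def Bmat (p : Fin 4 → ℝ) : Matrix (Fin 4) (Fin 4) ℝ :=
  !![((rr p)⁻¹ ^ 2 + (rr p) ^ 2) / 2, bcoef p * p 1, bcoef p * p 2, bcoef p * p 3;
     bcoef p * p 1, ccoef p * p 1 * p 1 + 1, ccoef p * p 1 * p 2, ccoef p * p 1 * p 3;
     bcoef p * p 2, ccoef p * p 2 * p 1, ccoef p * p 2 * p 2 + 1, ccoef p * p 2 * p 3;
     bcoef p * p 3, ccoef p * p 3 * p 1, ccoef p * p 3 * p 2, ccoef p * p 3 * p 3 + 1]

/-- `w₁⁺(p)`. -/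
def w1plus (p : Fin 4 → ℝ) : Fin 4 → ℝ := ![0, p 2 / rho p, -(p 1) / rho p, 0]

/-- `w₁⁻(p)`. -/
def w1minus (p : Fin 4 → ℝ) : Fin 4 → ℝ :=
  ![0, p 1 * p 3 / (rho p * rr p), p 2 * p 3 / (rho p * rr p), -(rho p) / rr p]

/-- `w_{r⁻²}(p)`. -/
def wrinv (p : Fin 4 → ℝ) : Fin 4 → ℝ :=
  ![1 / Real.sqrt 2, p 1 / (Real.sqrt 2 * rr p), p 2 / (Real.sqrt 2 * rr p),
    p 3 / (Real.sqrt 2 * rr p)]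

/-- `w_{r²}(p)`. -/
def wr (p : Fin 4 → ℝ) : Fin 4 → ℝ :=
  ![1 / Real.sqrt 2, -(p 1) / (Real.sqrt 2 * rr p), -(p 2) / (Real.sqrt 2 * rr p),
    -(p 3) / (Real.sqrt 2 * rr p)]

/-- `w₁⁺(p), w₁⁻(p), w_{r⁻²}(p), w_{r²}(p)` are eigenvectors of `B(p)` with
eigenvalues `1, 1, r⁻², r²` respectively. -/
theorem B_eigenvectors (p : Fin 4 → ℝ)
    (hcone : p 0 = rr p) (hr : 0 < rr p) (hrho : (p 1) ^ 2 + (p 2) ^ 2 ≠ 0) :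
    (Bmat p).mulVec (w1plus p) = (1 : ℝ) • w1plus p ∧
    (Bmat p).mulVec (w1minus p) = (1 : ℝ) • w1minus p ∧
    (Bmat p).mulVec (wrinv p) = ((rr p)⁻¹ ^ 2) • wrinv p ∧
    (Bmat p).mulVec (wr p) = ((rr p) ^ 2) • wr p := by
  have hr0 : rr p ≠ 0 := ne_of_gt hr
  have hr2 : rr p ^ 2 = (p 1) ^ 2 + (p 2) ^ 2 + (p 3) ^ 2 := by
    rw [rr, Real.sq_sqrt]; positivity
  have hrho2 : rho p ^ 2 = (p 1) ^ 2 + (p 2) ^ 2 := by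
    rw [rho, Real.sq_sqrt]; positivity
  have hrho0 : rho p ≠ 0 := by
    intro h; apply hrho; rw [← hrho2, h]; ring
  have hs2 : Real.sqrt 2 ≠ 0 := by positivity
  refine ⟨?_, ?_, ?_, ?_⟩
  · funext i
    fin_cases i
    · simp [Bmat, w1plus, w1minus, wrinv, wr, Matrix.mulVec, dotProduct,
            bcoef, ccoef, Fin.sum_univ_four]
      field_simp
      all_goals ring
    · simp [Bmat, w1plus, w1minus, wrinv, wr, Matrix.mulVec, dotProduct,
            bcoef, ccoef, Fin.sum_univ_four]
      field_simp
      all_goals ring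
    · simp [Bmat, w1plus, w1minus, wrinv, wr, Matrix.mulVec, dotProduct,
            bcoef, ccoef, Fin.sum_univ_four]
      field_simp
      all_goals ring
    · simp [Bmat, w1plus, w1minus, wrinv, wr, Matrix.mulVec, dotProduct,
            bcoef, ccoef, Fin.sum_univ_four]
      field_simp
      all_goals ring
  · funext i
    fin_cases i
    · simp [Bmat, w1plus, w1minus, wrinv, wr, Matrix.mulVec, dotProduct,
            bcoef, ccoef, Fin.sum_univ_four]
      linear_combination (norm := (field_simp; ring))
        (((-1/2)*rr p^2*p 2^2*p 3 + (-1/2)*rr p^2*p 1^2*p 3 + (1/2)*rr p^2*rho p^2*p 3) * hr2 + ((-1/2)*p 3 + (1/2)*rr p^2*p 3^3 + (1/2)*rr p^2*p 2^2*p 3 + (1/2)*rr p^2*p 1^2*p 3) * hrho2) / (rr p^4 * rho p^1 * Real.sqrt 2^0)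
    · simp [Bmat, w1plus, w1minus, wrinv, wr, Matrix.mulVec, dotProduct,
            bcoef, ccoef, Fin.sum_univ_four]
      linear_combination (norm := (field_simp; ring))
        (((-1)*p 1*p 2^2*p 3 + (-1)*p 1^3*p 3 + rho p^2*p 1*p 3 + (1/2)*rr p^2*p 1*p 2^2*p 3 + (1/2)*rr p^2*p 1^3*p 3 + (-1/2)*rr p^2*rho p^2*p 1*p 3) * hr2 + ((-1/2)*p 1*p 3 + p 1*p 3^3 + p 1*p 2^2*p 3 + p 1^3*p 3 + (-1/2)*rr p^2*p 1*p 3^3 + (-1/2)*rr p^2*p 1*p 2^2*p 3 + (-1/2)*rr p^2*p 1^3*p 3) * hrho2) / (rr p^5 * rho p^1 * Real.sqrt 2^0)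
    · simp [Bmat, w1plus, w1minus, wrinv, wr, Matrix.mulVec, dotProduct,
            bcoef, ccoef, Fin.sum_univ_four]
      linear_combination (norm := (field_simp; ring))
        (((-1)*p 2^3*p 3 + (-1)*p 1^2*p 2*p 3 + rho p^2*p 2*p 3 + (1/2)*rr p^2*p 2^3*p 3 + (1/2)*rr p^2*p 1^2*p 2*p 3 + (-1/2)*rr p^2*rho p^2*p 2*p 3) * hr2 + ((-1/2)*p 2*p 3 + p 2*p 3^3 + p 2^3*p 3 + p 1^2*p 2*p 3 + (-1/2)*rr p^2*p 2*p 3^3 + (-1/2)*rr p^2*p 2^3*p 3 + (-1/2)*rr p^2*p 1^2*p 2*p 3) * hrho2) / (rr p^5 * rho p^1 * Real.sqrt 2^0)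
    · simp [Bmat, w1plus, w1minus, wrinv, wr, Matrix.mulVec, dotProduct,
            bcoef, ccoef, Fin.sum_univ_four]
      linear_combination (norm := (field_simp; ring))
        (((-1)*p 2^2*p 3^2 + (-1)*p 1^2*p 3^2 + rho p^2*p 3^2 + (1/2)*rr p^2*p 2^2*p 3^2 + (1/2)*rr p^2*p 1^2*p 3^2 + (-1/2)*rr p^2*rho p^2*p 3^2) * hr2 + ((-1/2)*p 3^2 + p 3^4 + p 2^2*p 3^2 + p 1^2*p 3^2 + (-1/2)*rr p^2*p 3^4 + (-1/2)*rr p^2*p 2^2*p 3^2 + (-1/2)*rr p^2*p 1^2*p 3^2) * hrho2) / (rr p^5 * rho p^1 * Real.sqrt 2^0)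
  · funext i
    fin_cases i
    · simp [Bmat, w1plus, w1minus, wrinv, wr, Matrix.mulVec, dotProduct,
            bcoef, ccoef, Fin.sum_univ_four]
      linear_combination (norm := (field_simp; ring))
        (((-1/2) + (1/2)*rr p^4) * hr2) / (rr p^4 * rho p^0 * Real.sqrt 2^1)
    · simp [Bmat, w1plus, w1minus, wrinv, wr, Matrix.mulVec, dotProduct,
            bcoef, ccoef, Fin.sum_univ_four]
      linear_combination (norm := (field_simp; ring))
        (((-1/2)*p 1 + rr p^2*p 1 + (-1/2)*rr p^4*p 1) * hr2) / (rr p^5 * rho p^0 * Real.sqrt 2^1)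
    · simp [Bmat, w1plus, w1minus, wrinv, wr, Matrix.mulVec, dotProduct,
            bcoef, ccoef, Fin.sum_univ_four]
      linear_combination (norm := (field_simp; ring))
        (((-1/2)*p 2 + rr p^2*p 2 + (-1/2)*rr p^4*p 2) * hr2) / (rr p^5 * rho p^0 * Real.sqrt 2^1)
    · simp [Bmat, w1plus, w1minus, wrinv, wr, Matrix.mulVec, dotProduct,
            bcoef, ccoef, Fin.sum_univ_four]
      linear_combination (norm := (field_simp; ring))
        (((-1/2)*p 3 + rr p^2*p 3 + (-1/2)*rr p^4*p 3) * hr2) / (rr p^5 * rho p^0 * Real.sqrt 2^1)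
  · funext i
    fin_cases i
    · simp [Bmat, w1plus, w1minus, wrinv, wr, Matrix.mulVec, dotProduct,
            bcoef, ccoef, Fin.sum_univ_four]
      linear_combination (norm := (field_simp; ring))
        (((1/2) + (-1/2)*rr p^4) * hr2) / (rr p^4 * rho p^0 * Real.sqrt 2^1)
    · simp [Bmat, w1plus, w1minus, wrinv, wr, Matrix.mulVec, dotProduct,
            bcoef, ccoef, Fin.sum_univ_four]
      linear_combination (norm := (field_simp; ring))
        (((1/2)*p 1 + (-1)*rr p^2*p 1 + (1/2)*rr p^4*p 1) * hr2) / (rr p^5 * rho p^0 * Real.sqrt 2^1)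
    · simp [Bmat, w1plus, w1minus, wrinv, wr, Matrix.mulVec, dotProduct,
            bcoef, ccoef, Fin.sum_univ_four]
      linear_combination (norm := (field_simp; ring))
        (((1/2)*p 2 + (-1)*rr p^2*p 2 + (1/2)*rr p^4*p 2) * hr2) / (rr p^5 * rho p^0 * Real.sqrt 2^1)
    · simp [Bmat, w1plus, w1minus, wrinv, wr, Matrix.mulVec, dotProduct,
            bcoef, ccoef, Fin.sum_univ_four]
      linear_combination (norm := (field_simp; ring))
        (((1/2)*p 3 + (-1)*rr p^2*p 3 + (1/2)*rr p^4*p 3) * hr2) / (rr p^5 * rho p^0 * Real.sqrt 2^1)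

end
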